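/- With K*(X) = |⋃_{x∈X} D(x)| and I*(X:Y|Z) defined as K*(X∪Z) − K*(Z) − K*(X∪Y∪Z) + K*(Y∪Z): syntactic conditional independence I*(X:Y|Z) = 0 holds if and only if D_X ∩ D_Y ⊆ D_Z, where D_X = ⋃_{x∈X} D(x). -/

import Mathlib

/-! Since `D_(X ∪ Z) = D_X ∪ D_Z`, inclusion–exclusion for `D_X ∪ D_Z` and `D_Y ∪ D_Z`, whose
intersection is `(D_X ∩ D_Y) ∪ D_Z`, shows that `I*(X:Y|Z)` is the number of elements of
`(D_X ∩ D_Y) \ D_Z`; so it vanishes iff that difference is empty. -/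

open Finset

namespace Finset

variable {β : Type*} [DecidableEq β]

theorem card_union_add_card_union_eq (A B C : Finset β) :
    #(A ∪ C) + #(B ∪ C) = #(A ∪ B ∪ C) + #((A ∩ B) \ C) + #C := by
  rw [add_assoc, card_sdiff_add_card, inter_union_distrib_right, union_union_distrib_right,
    card_union_add_card_inter]

theorem card_union_sub_card_sub_card_union_union_add_card_union (A B C : Finset β) :
    (#(A ∪ C) : ℤ) - #C - #(A ∪ B ∪ C) + #(B ∪ C) = #((A ∩ B) \ C) := by
  have := card_union_add_card_union_eq A B C
  omega

end Finset

theorem stmt_6 {α β : Type*} [DecidableEq α] [DecidableEq β] (D : α → Finset β) :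
    ∀ X Y Z : Finset α,
      ((((X ∪ Z).biUnion D).card : ℤ) - ((Z.biUnion D).card : ℤ)
        - (((X ∪ Y ∪ Z).biUnion D).card : ℤ) + (((Y ∪ Z).biUnion D).card : ℤ)) = 0
      ↔ X.biUnion D ∩ Y.biUnion D ⊆ Z.biUnion D := by
  intro X Y Z
  simp only [union_biUnion, card_union_sub_card_sub_card_union_union_add_card_union,
    Nat.cast_eq_zero, card_eq_zero, sdiff_eq_empty_iff_subset]
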